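/- Let n, m, k be positive integers with k ≤ m ≤ n. Let X, Y ∈ ℝ^{n×m} and suppose X has full column rank m (equivalently, XᵀX is invertible), and write X† = (XᵀX)⁻¹Xᵀ. Let P ∈ ℝ^{n×k} be a matrix whose columns are orthonormal eigenvectors of Y Yᵀ associated with its k largest eigenvalues (counted with multiplicity); that is, Pᵀ P = I_k, Y Yᵀ P = P D for a diagonal matrix D ∈ ℝ^{k×k}, and every eigenvalue of Y Yᵀ attained on a vector orthogonal to the columns of P is at most every diagonal entry of D. Then the matrix A* = P Pᵀ Y X† satisfies rank(A*) ≤ k, and for every matrix A ∈ ℝ^{n×n} with rank(A) ≤ k one has ‖Y − A* X‖_F ≤ ‖Y − A X‖_F. In other words, A* = P Pᵀ Y X† is a solution of the low-rank DMD approximation problem min_{rank(A) ≤ k} ‖Y − A X‖_F. -/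

import Mathlib

open Matrix

/-- Frobenius norm of a real matrix. -/
noncomputable def frobNorm {n m : ℕ} (M : Matrix (Fin n) (Fin m) ℝ) : ℝ :=
  Real.sqrt (∑ i, ∑ j, (M i j) ^ 2)

/-!
Since `X† X = 1`, the candidate gives `A* X = P Pᵀ Y`, whose squared error is
`‖Y‖² - tr (Pᵀ Y Yᵀ P) = ‖Y‖² - tr D`. The columns of a competitor `A X` lie in the span of the
orthonormal columns of some `Q` with at most `k` columns, so its squared error is at least that of
the projection `Q Qᵀ Y`, namely `‖Y‖² - tr (Qᵀ Y Yᵀ Q)`. What remains is a Ky Fan inequality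
`tr (Qᵀ S Q) ≤ tr D` for `S = Y Yᵀ`: as `S` commutes with `P Pᵀ`,
`S = P D Pᵀ + (1 - P Pᵀ) S (1 - P Pᵀ)`, and the hypothesis on eigenvectors of `S` orthogonal to
`P` bounds the second summand by `c (1 - P Pᵀ)`, where `c` is the smallest diagonal entry of `D`.
-/

open scoped MatrixOrder

namespace Matrix

variable {n m κ ι : Type*} [Fintype n] [Fintype κ]

theorem le_smul_one_of_forall_eigenvalue_le [DecidableEq n] {T : Matrix n n ℝ} (hT : T.IsSymm)
    {c : ℝ} (h : ∀ (v : n → ℝ) (μ : ℝ), v ≠ 0 → T *ᵥ v = μ • v → μ ≤ c) : T ≤ c • 1 := by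
  have hsa : IsSelfAdjoint T := by
    rwa [IsSelfAdjoint, star_eq_conjTranspose, conjTranspose_eq_transpose_of_trivial]
  rw [← Algebra.algebraMap_eq_smul_one]
  refine le_algebraMap_of_spectrum_le (fun μ hμ => ?_) hsa
  rw [← spectrum_toLin', ← Module.End.hasEigenvalue_iff_mem_spectrum] at hμ
  obtain ⟨v, hv⟩ := hμ.exists_hasEigenvector
  exact h v μ hv.2 (by simpa using Module.End.mem_eigenspace_iff.mp hv.1)

theorem isStarProjection_mul_transpose [DecidableEq κ] {W : Matrix n κ ℝ} (hW : Wᵀ * W = 1) :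
    IsStarProjection (W * Wᵀ) where
  isIdempotentElem := by
    rw [IsIdempotentElem, Matrix.mul_assoc, ← Matrix.mul_assoc Wᵀ, hW, Matrix.one_mul]
  isSelfAdjoint := by
    simp [IsSelfAdjoint, star_eq_conjTranspose, conjTranspose_eq_transpose_of_trivial]

theorem transpose_mul_mul_self_eq_of_isStarProjection {R : Matrix n n ℝ}
    (hR : IsStarProjection R) (N : Matrix n ι ℝ) : (R * N)ᵀ * (R * N) = Nᵀ * R * N := by
  have hRt : Rᵀ = R := by
    simpa [IsSelfAdjoint, star_eq_conjTranspose, conjTranspose_eq_transpose_of_trivial] using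
      hR.isSelfAdjoint
  rw [transpose_mul, hRt, Matrix.mul_assoc, ← Matrix.mul_assoc R, hR.isIdempotentElem.eq,
    Matrix.mul_assoc]

theorem trace_transpose_mul_mul_le_of_le [Fintype ι] {A B : Matrix n n ℝ} (h : A ≤ B)
    (Q : Matrix n ι ℝ) : (Qᵀ * A * Q).trace ≤ (Qᵀ * B * Q).trace := by
  have := (le_iff.mp h).conjTranspose_mul_mul_same Q
  rw [conjTranspose_eq_transpose_of_trivial, Matrix.mul_sub, Matrix.sub_mul] at this
  simpa [trace_sub] using this.trace_nonneg

section Compression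

variable {S : Matrix n n ℝ} {P : Matrix n κ ℝ} {D : Matrix κ κ ℝ}

theorem transpose_mul_eq_mul_transpose_of_mul_eq (hS : S.IsSymm) (hD : D.IsSymm)
    (hSP : S * P = P * D) : Pᵀ * S = D * Pᵀ := by
  simpa [hS.eq, hD.eq] using congrArg transpose hSP

variable [DecidableEq n] [DecidableEq κ]

theorem eq_mul_mul_transpose_add_compression (hS : S.IsSymm) (hP : Pᵀ * P = 1) (hD : D.IsSymm)
    (hSP : S * P = P * D) :
    S = P * D * Pᵀ + (1 - P * Pᵀ) * S * (1 - P * Pᵀ) := by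
  have h₁ : P * Pᵀ * S = P * D * Pᵀ := by
    rw [Matrix.mul_assoc, transpose_mul_eq_mul_transpose_of_mul_eq hS hD hSP, Matrix.mul_assoc]
  have h₂ : S * (P * Pᵀ) = P * D * Pᵀ := by rw [← Matrix.mul_assoc, hSP]
  have h₃ : P * D * Pᵀ * (P * Pᵀ) = P * D * Pᵀ := by
    rw [Matrix.mul_assoc, ← Matrix.mul_assoc Pᵀ, hP, Matrix.one_mul]
  rw [Matrix.sub_mul, Matrix.one_mul, h₁, Matrix.mul_sub, Matrix.mul_one, Matrix.sub_mul, h₂, h₃]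
  abel

theorem compression_le_smul_one_sub (hS : S.IsSymm) (hP : Pᵀ * P = 1) (hD : D.IsSymm)
    (hSP : S * P = P * D) {c : ℝ} (hc : 0 ≤ c)
    (hTop : ∀ (v : n → ℝ) (μ : ℝ), v ≠ 0 → S *ᵥ v = μ • v → Pᵀ *ᵥ v = 0 → μ ≤ c) :
    (1 - P * Pᵀ) * S * (1 - P * Pᵀ) ≤ c • (1 - P * Pᵀ) := by
  set R := 1 - P * Pᵀ with hRdef
  have hR : IsStarProjection R := (isStarProjection_mul_transpose hP).one_sub
  have hPR : Pᵀ * R = 0 := by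
    rw [hRdef, Matrix.mul_sub, Matrix.mul_one, ← Matrix.mul_assoc, hP, Matrix.one_mul, sub_self]
  have hRSR : (R * S * R).IsSymm := by
    have hRt : Rᵀ = R := by simp [hRdef]
    simp [IsSymm, Matrix.mul_assoc, hRt, hS.eq]
  -- An eigenvector of `R S R` with nonzero eigenvalue lies in the range of `R`, where `R S R`
  -- acts as `S`; the eigenvalue `0` is handled by `0 ≤ c`.
  have hle : R * S * R ≤ c • 1 := le_smul_one_of_forall_eigenvalue_le hRSR fun v μ hv hμ => by
    by_cases hμ0 : μ = 0
    · exact hμ0 ▸ hc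
    have hPv : Pᵀ *ᵥ v = 0 := by
      have : μ • (Pᵀ *ᵥ v) = 0 := by
        rw [← mulVec_smul, ← hμ, mulVec_mulVec, ← Matrix.mul_assoc, ← Matrix.mul_assoc, hPR,
          Matrix.zero_mul, Matrix.zero_mul, zero_mulVec]
      exact (smul_eq_zero.mp this).resolve_left hμ0
    have hRv : R *ᵥ v = v := by simp [hRdef, sub_mulVec, ← mulVec_mulVec, hPv]
    have hPSv : Pᵀ *ᵥ (S *ᵥ v) = 0 := by
      rw [mulVec_mulVec, transpose_mul_eq_mul_transpose_of_mul_eq hS hD hSP, ← mulVec_mulVec,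
        hPv, mulVec_zero]
    refine hTop v μ hv ?_ hPv
    rw [← hμ, ← mulVec_mulVec, hRv, ← mulVec_mulVec]
    simp [hRdef, sub_mulVec, ← mulVec_mulVec, hPSv]
  calc R * S * R = R * (R * S * R) * R := by
        simp only [← Matrix.mul_assoc, hR.isIdempotentElem.eq]
        simp only [Matrix.mul_assoc, hR.isIdempotentElem.eq]
    _ ≤ R * (c • 1) * R := hR.isSelfAdjoint.conjugate_le_conjugate hle
    _ = c • R := by simp [hR.isIdempotentElem.eq]

theorem le_mul_mul_transpose_add_smul_one_sub (hS : S.IsSymm) (hP : Pᵀ * P = 1)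
    (hD : D.IsSymm) (hSP : S * P = P * D) {c : ℝ} (hc : 0 ≤ c)
    (hTop : ∀ (v : n → ℝ) (μ : ℝ), v ≠ 0 → S *ᵥ v = μ • v → Pᵀ *ᵥ v = 0 → μ ≤ c) :
    S ≤ P * D * Pᵀ + c • (1 - P * Pᵀ) := by
  conv_lhs => rw [eq_mul_mul_transpose_add_compression hS hP hD hSP]
  exact add_le_add_right (compression_le_smul_one_sub hS hP hD hSP hc hTop) _

end Compression

theorem sum_mul_add_mul_sub_sum_le {d R : κ → ℝ} {c r : ℝ} (hc : 0 ≤ c) (hcd : ∀ j, c ≤ d j)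
    (hR : ∀ j, R j ≤ 1) (hr : r ≤ Fintype.card κ) :
    ∑ j, d j * R j + c * (r - ∑ j, R j) ≤ ∑ j, d j := by
  have h₁ : ∑ j, (d j - c) * R j ≤ ∑ j, (d j - c) :=
    Finset.sum_le_sum fun j _ => mul_le_of_le_one_right (sub_nonneg.2 (hcd j)) (hR j)
  have h₂ : c * r ≤ c * Fintype.card κ := mul_le_mul_of_nonneg_left hr hc
  simp only [sub_mul, Finset.sum_sub_distrib, ← Finset.mul_sum, Finset.sum_const,
    Finset.card_univ, nsmul_eq_mul] at h₁
  linarith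

theorem transpose_mul_mul_transpose_mul_apply_le_one [Fintype ι] [DecidableEq n] [DecidableEq κ]
    [DecidableEq ι] {P : Matrix n κ ℝ} {Q : Matrix n ι ℝ} (hP : Pᵀ * P = 1) (hQ : Qᵀ * Q = 1) (j : κ) :
    (Pᵀ * (Q * Qᵀ) * P) j j ≤ 1 := by
  have h := (nonneg_iff_posSemidef.mp (isStarProjection_mul_transpose hQ).one_sub_nonneg
    |>.conjTranspose_mul_mul_same P)
  rw [conjTranspose_eq_transpose_of_trivial, Matrix.mul_sub, Matrix.sub_mul, Matrix.mul_one,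
    hP] at h
  simpa using h.diag_nonneg (i := j)

theorem trace_transpose_mul_mul_le_trace [Fintype ι] [DecidableEq n] [DecidableEq κ]
    [DecidableEq ι] [Nonempty κ] {S : Matrix n n ℝ} {P : Matrix n κ ℝ} {D : Matrix κ κ ℝ}
    (hS : S.PosSemidef) (hP : Pᵀ * P = 1) (hD : D.IsDiag) (hSP : S * P = P * D)
    (hTop : ∀ (v : n → ℝ) (μ : ℝ), v ≠ 0 → S *ᵥ v = μ • v → Pᵀ *ᵥ v = 0 → ∀ j, μ ≤ D j j)
    {Q : Matrix n ι ℝ} (hQ : Qᵀ * Q = 1) (hι : Fintype.card ι ≤ Fintype.card κ) :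
    (Qᵀ * S * Q).trace ≤ D.trace := by
  obtain ⟨j₀, hj₀⟩ := Finite.exists_min fun j => D j j
  have hSsymm : S.IsSymm := by
    simpa [IsSymm, IsHermitian, conjTranspose_eq_transpose_of_trivial] using hS.isHermitian
  have hc : 0 ≤ D j₀ j₀ := by
    have hPSP : Pᵀ * S * P = D := by
      rw [Matrix.mul_assoc, hSP, ← Matrix.mul_assoc, hP, Matrix.one_mul]
    simpa [conjTranspose_eq_transpose_of_trivial, hPSP] using
      (hS.conjTranspose_mul_mul_same P).diag_nonneg (i := j₀)
  set M := Pᵀ * (Q * Qᵀ) * P with hMdef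
  have hcyc : ∀ N : Matrix κ κ ℝ, (Qᵀ * (P * N * Pᵀ) * Q).trace = (N * M).trace := by
    intro N
    rw [show Qᵀ * (P * N * Pᵀ) * Q = (Qᵀ * P) * (N * (Pᵀ * Q)) by simp only [Matrix.mul_assoc],
      trace_mul_comm, hMdef]
    simp only [Matrix.mul_assoc]
  have hPP := hcyc 1
  rw [Matrix.mul_one, Matrix.one_mul] at hPP
  calc (Qᵀ * S * Q).trace
      ≤ (Qᵀ * (P * D * Pᵀ + D j₀ j₀ • (1 - P * Pᵀ)) * Q).trace :=
        trace_transpose_mul_mul_le_of_le (le_mul_mul_transpose_add_smul_one_sub hSsymm hP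
          hD.isSymm hSP hc fun v μ hv hμ hPv => hTop v μ hv hμ hPv j₀) Q
    _ = ∑ j, D j j * M j j + D j₀ j₀ * (Fintype.card ι - ∑ j, M j j) := by
        rw [Matrix.mul_add, Matrix.add_mul, trace_add, Matrix.mul_smul, Matrix.smul_mul,
          trace_smul, Matrix.mul_sub, Matrix.sub_mul, trace_sub, Matrix.mul_one, hQ, trace_one,
          hcyc, hPP, ← hD.diagonal_diag]
        simp [trace, diagonal_mul]
    _ ≤ ∑ j, D j j := sum_mul_add_mul_sub_sum_le hc (fun j => hj₀ j)
          (transpose_mul_mul_transpose_mul_apply_le_one hP hQ) (by exact_mod_cast hι)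

theorem trace_transpose_mul_self_sub_mul_eq [Fintype ι] [DecidableEq n] [DecidableEq κ]
    {W : Matrix n κ ℝ} (hW : Wᵀ * W = 1) (M : Matrix n ι ℝ) :
    ((M - W * Wᵀ * M)ᵀ * (M - W * Wᵀ * M)).trace =
      (Mᵀ * M).trace - (Wᵀ * (M * Mᵀ) * W).trace := by
  rw [show M - W * Wᵀ * M = (1 - W * Wᵀ) * M by rw [Matrix.sub_mul, Matrix.one_mul],
    transpose_mul_mul_self_eq_of_isStarProjection (isStarProjection_mul_transpose hW).one_sub,
    Matrix.mul_sub, Matrix.sub_mul, trace_sub, Matrix.mul_one]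
  congr 1
  rw [← Matrix.mul_assoc, Matrix.mul_assoc, trace_mul_comm]
  simp only [Matrix.mul_assoc]

theorem trace_transpose_mul_self_sub_le [Fintype ι] [DecidableEq n] [DecidableEq κ]
    {W : Matrix n κ ℝ} (hW : Wᵀ * W = 1) (M : Matrix n ι ℝ) {B : Matrix n ι ℝ}
    (hB : W * Wᵀ * B = B) :
    (Mᵀ * M).trace - (Wᵀ * (M * Mᵀ) * W).trace ≤ ((M - B)ᵀ * (M - B)).trace := by
  have hR := (isStarProjection_mul_transpose hW).one_sub
  have hRB : (1 - W * Wᵀ) * (M - B) = M - W * Wᵀ * M := by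
    rw [Matrix.mul_sub, Matrix.sub_mul, Matrix.sub_mul, hB, Matrix.one_mul, Matrix.one_mul]
    abel
  rw [← trace_transpose_mul_self_sub_mul_eq hW, ← hRB,
    transpose_mul_mul_self_eq_of_isStarProjection hR]
  simpa using trace_transpose_mul_mul_le_of_le hR.le_one (M - B)

theorem exists_orthonormal_cols_mul_transpose_mul_eq [Fintype m] [DecidableEq n] [DecidableEq m]
    (B : Matrix n m ℝ) : ∃ Q : Matrix n (Fin B.rank) ℝ, Qᵀ * Q = 1 ∧ Q * Qᵀ * B = B := by
  set V := LinearMap.range (toLpLin 2 2 B)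
  have hV : Module.finrank ℝ V = B.rank := by
    rw [rank_eq_finrank_range_toLin B (PiLp.basisFun 2 ℝ n) (PiLp.basisFun 2 ℝ m),
      ← toLpLin_eq_toLin]
  let b := (stdOrthonormalBasis ℝ V).reindex (finCongr hV)
  let q : Fin B.rank → EuclideanSpace ℝ n := fun c => b c
  let Q : Matrix n (Fin B.rank) ℝ := of fun i c => q c i
  have hgram : gram ℝ q = Qᵀ * Q := by
    simpa [Q] using gram_eq_conjTranspose_mul (EuclideanSpace.basisFun n ℝ) q
  have hproj : Q * Qᵀ = (toLpLin 2 2).symm V.starProjection := by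
    rw [b.starProjection_eq_sum_rankOne, ContinuousLinearMap.toLinearMap_sum, map_sum]
    simp only [InnerProductSpace.symm_toEuclideanLin_rankOne]
    ext i i'
    simp [Q, q, mul_apply, vecMulVec_apply, Matrix.sum_apply]
  refine ⟨Q, ?_, ?_⟩
  · rw [← hgram, gram_eq_one_iff_orthonormal]
    exact b.orthonormal.comp_linearIsometry V.subtypeₗᵢ
  · refine (toLpLin 2 2).injective ?_
    rw [toLpLin_mul_same, hproj, LinearEquiv.apply_symm_apply]
    ext1 v
    exact V.starProjection_eq_self_iff.mpr (LinearMap.mem_range_self _ v)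

end Matrix

theorem frobNorm_eq_sqrt_trace {n m : ℕ} (M : Matrix (Fin n) (Fin m) ℝ) :
    frobNorm M = √(Mᵀ * M).trace := by
  rw [frobNorm, Finset.sum_comm]
  simp [trace, mul_apply, sq]

theorem lowRank_DMD_closed_form_general
    (n m k : ℕ) (hk : 0 < k)
    (X Y : Matrix (Fin n) (Fin m) ℝ)
    (hX : IsUnit (Xᵀ * X))
    (P : Matrix (Fin n) (Fin k) ℝ)
    (D : Matrix (Fin k) (Fin k) ℝ)
    (hP : Pᵀ * P = 1)
    (hD : D.IsDiag)
    (hEig : Y * Yᵀ * P = P * D)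
    (hTop : ∀ (v : Fin n → ℝ) (μ : ℝ), v ≠ 0 → (Y * Yᵀ) *ᵥ v = μ • v →
      Pᵀ *ᵥ v = 0 → ∀ j : Fin k, μ ≤ D j j) :
    (P * Pᵀ * Y * ((Xᵀ * X)⁻¹ * Xᵀ)).rank ≤ k ∧
    ∀ A : Matrix (Fin n) (Fin n) ℝ, A.rank ≤ k →
      frobNorm (Y - (P * Pᵀ * Y * ((Xᵀ * X)⁻¹ * Xᵀ)) * X) ≤ frobNorm (Y - A * X) := by
  refine ⟨(rank_mul_le_left _ _).trans <| (rank_mul_le_left _ _).trans <|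
    (rank_mul_le_left _ _).trans P.rank_le_width, fun A hA => ?_⟩
  have hXdag : (Xᵀ * X)⁻¹ * Xᵀ * X = 1 := by
    rw [Matrix.mul_assoc]
    exact nonsing_inv_mul _ ((isUnit_iff_isUnit_det _).mp hX)
  have hS : (Y * Yᵀ).PosSemidef := by
    simpa [conjTranspose_eq_transpose_of_trivial] using posSemidef_self_mul_conjTranspose Y
  have : Nonempty (Fin k) := ⟨⟨0, hk⟩⟩
  obtain ⟨Q, hQ, hQB⟩ := exists_orthonormal_cols_mul_transpose_mul_eq (A * X)
  have hrank : Fintype.card (Fin (A * X).rank) ≤ Fintype.card (Fin k) := by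
    simpa using (rank_mul_le_left A X).trans hA
  rw [Matrix.mul_assoc _ _ X, hXdag, Matrix.mul_one, frobNorm_eq_sqrt_trace,
    frobNorm_eq_sqrt_trace]
  refine Real.sqrt_le_sqrt ?_
  calc ((Y - P * Pᵀ * Y)ᵀ * (Y - P * Pᵀ * Y)).trace = (Yᵀ * Y).trace - D.trace := by
        rw [trace_transpose_mul_self_sub_mul_eq hP, Matrix.mul_assoc, hEig, ← Matrix.mul_assoc,
          hP, Matrix.one_mul]
    _ ≤ (Yᵀ * Y).trace - (Qᵀ * (Y * Yᵀ) * Q).trace := by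
        gcongr
        exact trace_transpose_mul_mul_le_trace hS hP hD hEig hTop hQ hrank
    _ ≤ ((Y - A * X)ᵀ * (Y - A * X)).trace := trace_transpose_mul_self_sub_le hQ Y hQB

/-- Theorem 1: the closed-form optimal solution of the low-rank DMD problem.
`A* = P Pᵀ Y X†` with `X† = (XᵀX)⁻¹Xᵀ` has rank at most `k` and minimizes
`‖Y − A X‖_F` over all `A` with `rank A ≤ k`. -/
theorem lowRank_DMD_closed_form
    (n m k : ℕ) (hk : 0 < k) (hkm : k ≤ m) (hmn : m ≤ n)
    (X Y : Matrix (Fin n) (Fin m) ℝ)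
    (hX : IsUnit (Xᵀ * X))
    (P : Matrix (Fin n) (Fin k) ℝ)
    (D : Matrix (Fin k) (Fin k) ℝ)
    (hP : Pᵀ * P = 1)
    (hD : D.IsDiag)
    (hEig : Y * Yᵀ * P = P * D)
    (hTop : ∀ (v : Fin n → ℝ) (μ : ℝ), v ≠ 0 → (Y * Yᵀ) *ᵥ v = μ • v →
      Pᵀ *ᵥ v = 0 → ∀ j : Fin k, μ ≤ D j j) :
    (P * Pᵀ * Y * ((Xᵀ * X)⁻¹ * Xᵀ)).rank ≤ k ∧
    ∀ A : Matrix (Fin n) (Fin n) ℝ, A.rank ≤ k →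
      frobNorm (Y - (P * Pᵀ * Y * ((Xᵀ * X)⁻¹ * Xᵀ)) * X) ≤ frobNorm (Y - A * X) :=
  lowRank_DMD_closed_form_general n m k hk X Y hX P D hP hD hEig hTop
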